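/- arXiv:2501.00123 — 2 statements merged into one kernel-verified Lean document; each statement's English description precedes it below -/
import Mathlib

section
/- Let (L,*) be a loop with involution where * is not the identity map, and γ central. Then: (1) the set of elements of D(L,*,γ) commuting with every element of L equals the commutant K(L) of L; (2) the set of elements commuting with every element of Lj equals the set of symmetric elements of L; (3) the commutant of D(L,*,γ) equals the set of symmetric elements of K(L). -/
universe u

class Loop (L : Type u) extends Mul L, One L where
  ldiv : L → L → L
  rdiv : L → L → L
  mul_ldiv : ∀ a b : L, a * ldiv a b = b
  ldiv_mul : ∀ a b : L, ldiv a (a * b) = b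
  rdiv_mul : ∀ a b : L, rdiv b a * a = b
  mul_rdiv : ∀ a b : L, rdiv (b * a) a = b
  one_mul : ∀ a : L, 1 * a = a
  mul_one : ∀ a : L, a * 1 = a

section Magma
variable {M : Type u} (mul : M → M → M)

/-- Left nucleus of a magma. -/
def leftNucS : Set M := {a | ∀ x y, mul (mul a x) y = mul a (mul x y)}
/-- Middle nucleus of a magma. -/
def midNucS : Set M := {a | ∀ x y, mul (mul x a) y = mul x (mul a y)}
/-- Right nucleus of a magma. -/
def rightNucS : Set M := {a | ∀ x y, mul (mul x y) a = mul x (mul y a)}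
/-- Nucleus of a magma. -/
def nucS : Set M := leftNucS mul ∩ midNucS mul ∩ rightNucS mul
/-- Commutant (commutative center) of a magma. -/
def commutantS : Set M := {a | ∀ x, mul a x = mul x a}
/-- Center of a magma: the commutant intersected with the nucleus. -/
def centerS : Set M := commutantS mul ∩ nucS mul
end Magma

namespace Loop
variable {L : Type u} [Loop L]

/-- The left inverse `a^λ`, satisfying `a^λ * a = 1`. -/
def linv (a : L) : L := Loop.rdiv 1 a
/-- The right inverse `a^ρ`, satisfying `a * a^ρ = 1`. -/
def rinv (a : L) : L := Loop.ldiv a 1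
/-- The commutator `[a,b]`, defined by `a*b = (b*a)*[a,b]`. -/
def comm (a b : L) : L := Loop.ldiv (b*a) (a*b)
/-- The associator `[a,b,c]`, defined by `(a*b)*c = (a*(b*c))*[a,b,c]`. -/
def assoc (a b c : L) : L := Loop.ldiv (a*(b*c)) ((a*b)*c)

end Loop

/-- The nucleus of a loop. -/
abbrev LNuc (L : Type u) [Loop L] : Set L := nucS (fun x y : L => x * y)
/-- The commutant of a loop. -/
abbrev LCommutant (L : Type u) [Loop L] : Set L := commutantS (fun x y : L => x * y)
/-- The center of a loop. -/
abbrev LCenter (L : Type u) [Loop L] : Set L := centerS (fun x y : L => x * y)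

/-- Multiplication of the Cayley–Dickson double `D(L,*,γ) = L ∪ Lj`,
encoded on `L × Bool` with `(a, false) = a` and `(a, true) = a·j`. -/
def CDmul {L : Type u} [Loop L] (star : L → L) (γ : L) :
    L × Bool → L × Bool → L × Bool
  | (a, false), (b, false) => (a * b, false)
  | (a, false), (b, true)  => (b * a, true)
  | (a, true),  (b, false) => (a * star b, true)
  | (a, true),  (b, true)  => (γ * (star b * a), false)

/-!
Every product in the double is computed componentwise by one of the four rules, so by left
cancellation in `L` the commutation conditions reduce to identities in `L`; the central factor `γ`
of `(aj)(bj) = γ(b^*a)` cancels in the same way. The only nontrivial point is that no `aj` commutes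
with all of `Lj`: that would mean `b^* a = a^* b` for all `b`, so `a^* = a` (take `b = 1`) and then
`c^* = (a(a\c))^* = (a\c)^* a = a^*(a\c) = c` for every `c`, i.e. `*` would be the identity.
-/

namespace Loop
variable {L : Type u} [Loop L]

theorem mul_left_cancel {a b c : L} (h : a * b = a * c) : b = c := by
  rw [← Loop.ldiv_mul a b, h, Loop.ldiv_mul]

variable {star : L → L}

theorem star_one_of_anti (hanti : ∀ a b : L, star (a * b) = star b * star a) : star 1 = 1 := by
  apply mul_left_cancel (a := star 1)
  rw [← hanti, Loop.mul_one, Loop.mul_one]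

theorem star_eq_self_of_forall_star_mul_eq (hanti : ∀ a b : L, star (a * b) = star b * star a)
    {a : L} (h : ∀ b, star b * a = star a * b) (c : L) :
    star c = c := by
  have hsymm : star a = a := by
    simpa [star_one_of_anti hanti, Loop.one_mul, Loop.mul_one] using (h 1).symm
  calc star c = star (a * Loop.ldiv a c) := by rw [Loop.mul_ldiv]
    _ = star (Loop.ldiv a c) * a := by rw [hanti, hsymm]
    _ = a * Loop.ldiv a c := by rw [h, hsymm]
    _ = c := Loop.mul_ldiv a c

end Loop

namespace CDmul
variable {L : Type u} [Loop L] (star : L → L) (γ : L)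

theorem comm_base_base_iff (a b : L) :
    CDmul star γ (a, false) (b, false) = CDmul star γ (b, false) (a, false) ↔
      a * b = b * a := by
  simp [CDmul]

theorem comm_base_j_iff (a b : L) :
    CDmul star γ (a, false) (b, true) = CDmul star γ (b, true) (a, false) ↔ star a = a := by
  simp only [CDmul, Prod.mk.injEq, and_true]
  exact ⟨fun h => (Loop.mul_left_cancel h).symm, fun h => by rw [h]⟩

theorem comm_j_base_iff (a b : L) :
    CDmul star γ (a, true) (b, false) = CDmul star γ (b, false) (a, true) ↔ star b = b := by
  simp only [CDmul, Prod.mk.injEq, and_true]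
  exact ⟨Loop.mul_left_cancel, fun h => by rw [h]⟩

theorem comm_j_j_iff (a b : L) :
    CDmul star γ (a, true) (b, true) = CDmul star γ (b, true) (a, true) ↔
      star b * a = star a * b := by
  simp only [CDmul, Prod.mk.injEq, and_true]
  exact ⟨Loop.mul_left_cancel, fun h => by rw [h]⟩

variable {star}

theorem centralizer_base (hnid : ¬ ∀ a : L, star a = a) :
    {x : L × Bool | ∀ b : L, CDmul star γ x (b, false) = CDmul star γ (b, false) x}
      = {x : L × Bool | ∃ a : L, a ∈ LCommutant L ∧ x = (a, false)} := by
  ext ⟨a, _ | _⟩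
  · simp [comm_base_base_iff, LCommutant, commutantS]
  · simpa [comm_j_base_iff] using hnid

theorem centralizer_j (hanti : ∀ a b : L, star (a * b) = star b * star a)
    (hnid : ¬ ∀ a : L, star a = a) :
    {x : L × Bool | ∀ b : L, CDmul star γ x (b, true) = CDmul star γ (b, true) x}
      = {x : L × Bool | ∃ a : L, star a = a ∧ x = (a, false)} := by
  ext ⟨a, _ | _⟩
  · simp only [Set.mem_ofPred_eq, comm_base_j_iff, Prod.mk.injEq, and_true, exists_eq_right']
    exact ⟨fun h => h 1, fun h _ => h⟩
  · simp only [Set.mem_ofPred_eq, comm_j_j_iff, Prod.mk.injEq, reduceCtorEq, and_false,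
      exists_false, iff_false]
    exact fun h => hnid (Loop.star_eq_self_of_forall_star_mul_eq hanti h)

theorem commutantS_eq_inter :
    commutantS (CDmul star γ)
      = {x : L × Bool | ∀ b : L, CDmul star γ x (b, false) = CDmul star γ (b, false) x} ∩
        {x : L × Bool | ∀ b : L, CDmul star γ x (b, true) = CDmul star γ (b, true) x} := by
  ext x
  simp only [commutantS, Set.mem_inter_iff, Set.mem_ofPred_eq, Prod.forall, Bool.forall_bool]
  exact forall_and

end CDmul

theorem stmt13_general {L : Type u} [Loop L] (star : L → L)
    (hanti : ∀ a b : L, star (a * b) = star b * star a)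
    (γ : L)
    (hnid : ¬ (∀ a : L, star a = a)) :
    ({x : L × Bool | ∀ b : L, CDmul star γ x (b, false) = CDmul star γ (b, false) x}
        = {x : L × Bool | ∃ a : L, a ∈ LCommutant L ∧ x = (a, false)}) ∧
    ({x : L × Bool | ∀ b : L, CDmul star γ x (b, true) = CDmul star γ (b, true) x}
        = {x : L × Bool | ∃ a : L, star a = a ∧ x = (a, false)}) ∧
    (commutantS (CDmul star γ)
        = {x : L × Bool | ∃ a : L, a ∈ LCommutant L ∧ star a = a ∧ x = (a, false)}) := by
  have hbase := CDmul.centralizer_base γ hnid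
  have hj := CDmul.centralizer_j γ hanti hnid
  refine ⟨hbase, hj, ?_⟩
  rw [CDmul.commutantS_eq_inter, hbase, hj]
  ext x
  constructor
  · rintro ⟨⟨a, ha, rfl⟩, ⟨_, hsymm, hx⟩⟩
    cases (Prod.mk.inj hx).1
    exact ⟨a, ha, hsymm, rfl⟩
  · rintro ⟨a, ha, hsymm, rfl⟩
    exact ⟨⟨a, ha, rfl⟩, ⟨a, hsymm, rfl⟩⟩

/-- For a non-identity involution: the centralizer of `L` in the double is the
commutant of `L`; the centralizer of `Lj` is the set of symmetric elements of
`L`; and the commutant of the double is the set of symmetric elements of the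
commutant of `L`. -/
theorem stmt13 {L : Type u} [Loop L] (star : L → L)
    (hstar2 : ∀ a : L, star (star a) = a)
    (hanti : ∀ a b : L, star (a * b) = star b * star a)
    (γ : L) (hγ : γ ∈ LCenter L)
    (hnid : ¬ (∀ a : L, star a = a)) :
    ({x : L × Bool | ∀ b : L, CDmul star γ x (b, false) = CDmul star γ (b, false) x}
        = {x : L × Bool | ∃ a : L, a ∈ LCommutant L ∧ x = (a, false)}) ∧
    ({x : L × Bool | ∀ b : L, CDmul star γ x (b, true) = CDmul star γ (b, true) x}
        = {x : L × Bool | ∃ a : L, star a = a ∧ x = (a, false)}) ∧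
    (commutantS (CDmul star γ)
        = {x : L × Bool | ∃ a : L, a ∈ LCommutant L ∧ star a = a ∧ x = (a, false)}) :=
  stmt13_general star hanti γ hnid
end

section
/- Let (L,*) be a loop with involution and γ a symmetric central element. Then D(L,*,γ) is a Moufang loop if and only if: L is Moufang, [a, cc^*] = 1 for all a,c, [c, c^*] = 1 for all c, [a, c, c^*] = 1 for all a,c, and cc^*c lies in the nucleus of L for every c. -/
universe u

/-!
Expanding the Moufang law of `D(L,*,γ)` over the eight ways of placing `x, y, z` in `L` or `Lj`
and pulling the central `γ` out leaves the Moufang law of `L` and, for each `c`, the two identities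
`(u c^*)(c v) = c^*(c(uv))` and `(u c)(c^* v) = c^*(c(uv))`. In a Moufang loop these are equivalent
to the conditions on the norm `n = c c^*`: specialising `u, v` shows that `n` commutes with
everything, `c c^* = c^* c` and `(a c) c^* = a n`, and then `n c` is left nuclear, hence nuclear.
Conversely `c^* = (n c) c⁻²`, and with `n c` nuclear both identities reduce to `(u v) n = n (u v)`.
-/

namespace Loop

variable {L : Type u} [Loop L]

theorem mul_left_cancel_iff {a b c : L} : a * b = a * c ↔ b = c :=
  ⟨fun h => by simpa only [Loop.ldiv_mul] using congrArg (Loop.ldiv a) h, congrArg (a * ·)⟩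

theorem mul_right_cancel {a b c : L} (h : b * a = c * a) : b = c := by
  simpa only [Loop.mul_rdiv] using congrArg (Loop.rdiv · a) h

theorem mul_rinv (a : L) : a * rinv a = 1 := Loop.mul_ldiv a 1

theorem mul_comm_of_mem_center {γ : L} (hγ : γ ∈ LCenter L) (x : L) : x * γ = γ * x :=
  (hγ.1 x).symm

theorem mul_assoc_of_mem_center {γ : L} (hγ : γ ∈ LCenter L) (x y : L) :
    (γ * x) * y = γ * (x * y) :=
  hγ.2.1.1 x y

theorem mul_left_comm_of_mem_center {γ : L} (hγ : γ ∈ LCenter L) (x y : L) :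
    x * (γ * y) = γ * (x * y) :=
  calc x * (γ * y) = (x * γ) * y := (hγ.2.1.2 x y).symm
    _ = γ * (x * y) := by rw [mul_comm_of_mem_center hγ, mul_assoc_of_mem_center hγ]

theorem mem_nuc_iff {q : L} :
    q ∈ LNuc L ↔ (∀ x y : L, (q * x) * y = q * (x * y)) ∧
      (∀ x y : L, (x * q) * y = x * (q * y)) ∧ (∀ x y : L, (x * y) * q = x * (y * q)) :=
  ⟨fun ⟨⟨hl, hm⟩, hr⟩ => ⟨hl, hm, hr⟩, fun ⟨hl, hm, hr⟩ => ⟨⟨hl, hm⟩, hr⟩⟩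

variable (L) in
def IsMoufang : Prop := ∀ x y z : L, (z * x) * (y * z) = (z * (x * y)) * z

namespace IsMoufang

theorem flexible (hM : IsMoufang L) (z y : L) : z * (y * z) = (z * y) * z := by
  simpa only [Loop.mul_one, Loop.one_mul] using hM 1 y z

theorem rinv_mul (hM : IsMoufang L) (z : L) : rinv z * z = 1 := by
  have h := hM.flexible z (rinv z)
  rw [mul_rinv, Loop.one_mul] at h
  exact mul_left_cancel_iff.mp (h.trans (Loop.mul_one z).symm)

theorem mul_rinv_cancel_left (hM : IsMoufang L) (z y : L) : z * (rinv z * y) = y := by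
  have h := hM (rinv z) y z
  rw [mul_rinv, Loop.one_mul] at h
  exact (mul_right_cancel h).symm

theorem rinv_rinv (hM : IsMoufang L) (z : L) : rinv (rinv z) = z :=
  mul_left_cancel_iff.mp ((mul_rinv _).trans (hM.rinv_mul z).symm)

theorem rinv_mul_cancel_left (hM : IsMoufang L) (z y : L) : rinv z * (z * y) = y := by
  simpa only [hM.rinv_rinv] using hM.mul_rinv_cancel_left (rinv z) y

theorem rinv_mul_cancel_right (hM : IsMoufang L) (x z : L) : (x * rinv z) * z = x := by
  have h := hM x (rinv z) z
  rw [hM.rinv_mul, Loop.mul_one, ← hM.flexible] at h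
  exact mul_left_cancel_iff.mp h.symm

theorem mul_rinv_cancel_right (hM : IsMoufang L) (x z : L) : (x * z) * rinv z = x := by
  simpa only [hM.rinv_rinv] using hM.rinv_mul_cancel_right x (rinv z)

theorem moufang_middle_right (hM : IsMoufang L) (x y z : L) :
    (z * x) * (y * z) = z * ((x * y) * z) :=
  (hM x y z).trans (hM.flexible z (x * y)).symm

theorem left_alternative (hM : IsMoufang L) (z y : L) : (z * z) * y = z * (z * y) := by
  obtain ⟨w, rfl⟩ : ∃ w, w * z = y := ⟨rdiv y z, Loop.rdiv_mul z y⟩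
  rw [hM, ← hM.flexible, hM.flexible z w]

theorem right_alternative (hM : IsMoufang L) (y z : L) : (y * z) * z = y * (z * z) := by
  obtain ⟨w, rfl⟩ : ∃ w, z * w = y := ⟨ldiv z y, Loop.mul_ldiv z y⟩
  rw [← hM.flexible, ← hM]

theorem rinv_mul_rev (hM : IsMoufang L) (x y : L) : rinv (x * y) = rinv y * rinv x := by
  have h : rinv (x * y) * x = rinv y := by
    simpa only [hM.mul_rinv_cancel_right] using hM.rinv_mul_cancel_left (x * y) (rinv y)
  rw [← h, hM.mul_rinv_cancel_right]

theorem rinv_injective (hM : IsMoufang L) : Function.Injective (rinv : L → L) :=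
  fun a b h => by simpa only [hM.rinv_rinv] using congrArg rinv h

theorem mul_mul_mul_rinv_mul (hM : IsMoufang L) (z x y : L) :
    (z * (x * z)) * (rinv z * y) = z * (x * y) := by
  have h : z * (x * z) = (z * (x * y)) * (rinv y * z) := by
    simpa only [hM.mul_rinv_cancel_right] using (hM.moufang_middle_right (x * y) (rinv y) z).symm
  have h' : rinv (rinv y * z) = rinv z * y := by rw [hM.rinv_mul_rev, hM.rinv_rinv]
  rw [h, ← h', hM.mul_rinv_cancel_right]

theorem left_moufang (hM : IsMoufang L) (z x y : L) : ((z * x) * z) * y = z * (x * (z * y)) := by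
  simpa only [hM.rinv_mul_cancel_left, hM.flexible] using hM.mul_mul_mul_rinv_mul z x (z * y)

theorem right_moufang (hM : IsMoufang L) (x y z : L) : ((x * z) * y) * z = x * (z * (y * z)) := by
  apply hM.rinv_injective
  simp only [hM.rinv_mul_rev]
  exact (hM.left_moufang (rinv z) (rinv y) (rinv x)).symm

theorem mem_nuc_of_left_assoc (hM : IsMoufang L) {q : L}
    (hq : ∀ x y : L, (q * x) * y = q * (x * y)) : q ∈ LNuc L := by
  have hmid : ∀ x y : L, (x * q) * y = x * (q * y) := fun x y =>
    calc (x * q) * y = (x * ((q * rinv x) * x)) * (rinv x * (x * y)) := by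
          rw [hM.rinv_mul_cancel_right, hM.rinv_mul_cancel_left]
      _ = x * ((q * rinv x) * (x * y)) := hM.mul_mul_mul_rinv_mul x _ _
      _ = x * (q * y) := by rw [hq, hM.rinv_mul_cancel_left]
  have hinv : ∀ x y : L, (rinv q * x) * y = rinv q * (x * y) := fun x y => by
    have h := hq (rinv q * x) y
    rw [hM.mul_rinv_cancel_left, ← mul_left_cancel_iff (a := rinv q), hM.rinv_mul_cancel_left] at h
    exact h.symm
  refine mem_nuc_iff.mpr ⟨hq, hmid, fun x y => hM.rinv_injective ?_⟩
  simp only [hM.rinv_mul_rev]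
  exact (hinv (rinv y) (rinv x)).symm

section

variable {c k n : L}

-- `k` is forced to be `c⁻¹ n`; this form puts the nuclear element `n c` in front.
theorem eq_nuc_mul_rinv_mul_rinv (hM : IsMoufang L) (hn : ∀ a : L, a * n = n * a)
    (hk : ∀ a : L, (a * c) * k = a * n) (hnc : n * c ∈ LNuc L) :
    k = (n * c) * (rinv c * rinv c) := by
  have h : k = rinv c * n := by simpa only [hM.rinv_mul, Loop.one_mul] using hk (rinv c)
  rw [h, ← (mem_nuc_iff.mp hnc).1, hM.mul_rinv_cancel_right, hn]

theorem mul_mul_eq_of_mem_nuc (hM : IsMoufang L) (hn : ∀ a : L, a * n = n * a)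
    (hk : ∀ a : L, (a * c) * k = a * n) (hnc : n * c ∈ LNuc L) (w : L) :
    k * (c * w) = n * w := by
  have hl := (mem_nuc_iff.mp hnc).1
  calc k * (c * w) = ((n * c) * (rinv c * rinv c)) * (c * w) := by
        rw [← hM.eq_nuc_mul_rinv_mul_rinv hn hk hnc]
    _ = (n * c) * (rinv c * (rinv c * (c * w))) := by rw [hl, hM.left_alternative]
    _ = ((n * c) * rinv c) * w := by rw [hM.rinv_mul_cancel_left, hl]
    _ = n * w := by rw [hM.mul_rinv_cancel_right]

theorem mul_mul_mul_eq_of_mem_nuc (hM : IsMoufang L) (hn : ∀ a : L, a * n = n * a)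
    (hk : ∀ a : L, (a * c) * k = a * n) (hnc : n * c ∈ LNuc L) (u v : L) :
    (u * c) * (k * v) = (u * v) * n := by
  obtain ⟨hl, hm, hr⟩ := mem_nuc_iff.mp hnc
  have hc : c * (n * c) = (n * c) * c :=
    calc c * (n * c) = (c * c) * n := by rw [← hn c, hM.left_alternative]
      _ = (n * c) * c := by rw [hn, hM.right_alternative]
  have hcomm : ∀ g : L, c * (g * (n * c)) = (n * c) * (g * c) := fun g => by
    rw [← hr, hM, hn g, ← hM, hn c]
  have hv : (u * (n * c)) * ((rinv c * v) * c) = ((u * v) * n) * c :=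
    calc (u * (n * c)) * ((rinv c * v) * c) = u * ((c * (rinv c * v)) * (n * c)) := by
          rw [hm, ← hcomm, ← hr]
      _ = (((u * v) * (n * c)) * rinv c) * c := by
          rw [hM.mul_rinv_cancel_left, ← hr, hM.rinv_mul_cancel_right]
      _ = ((u * v) * n) * c := by rw [hm, hM.mul_rinv_cancel_right]
  calc (u * c) * (k * v) = ((u * (n * c)) * c) * (rinv c * (rinv c * v)) := by
        rw [hM.eq_nuc_mul_rinv_mul_rinv hn hk hnc, hl, ← hm, hr, hc, ← hm,
          hM.left_alternative]
    _ = ((u * (n * c)) * ((rinv c * v) * c)) * rinv c := by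
        rw [← hM.mul_rinv_cancel_right (rinv c * v) c, ← hM.right_moufang,
          hM.mul_rinv_cancel_right, hM.mul_rinv_cancel_right]
    _ = (u * v) * n := by rw [hv, hM.mul_rinv_cancel_right]

theorem mul_mem_nuc_of_mul_mul_mul_eq (hM : IsMoufang L) (hn : ∀ a : L, a * n = n * a)
    (hk : ∀ a : L, (a * c) * k = a * n) (hkc : ∀ u v : L, (u * k) * (c * v) = (u * v) * n) :
    n * c ∈ LNuc L := by
  have hshift : ∀ x t : L, (n * x) * t = n * ((x * c) * (rinv c * t)) := fun x t =>
    calc (n * x) * t = ((x * c) * k) * (c * (rinv c * t)) := by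
          rw [hk, hn, hM.mul_rinv_cancel_left]
      _ = n * ((x * c) * (rinv c * t)) := by rw [hkc, hn]
  have hx : ∀ x : L, (n * c) * x = n * (c * x) := fun x => by
    rw [hshift, hM.left_alternative, hM.mul_rinv_cancel_left]
  refine hM.mem_nuc_of_left_assoc fun x y => ?_
  calc ((n * c) * x) * y = n * (((c * x) * c) * (rinv c * y)) := by rw [hx, hshift]
    _ = (n * c) * (x * y) := by rw [hM.left_moufang, hM.mul_rinv_cancel_left, hx]

end

end IsMoufang

-- `s` stands for `c^*`, so `c * s` is the norm of `c`.
def NormConditions (c s : L) : Prop :=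
  (∀ a : L, a * (c * s) = (c * s) * a) ∧ c * s = s * c ∧
    (∀ a : L, (a * c) * s = a * (c * s)) ∧ (c * s) * c ∈ LNuc L

def DoubleIdentities (c s : L) : Prop :=
  (∀ u v : L, (u * s) * (c * v) = s * (c * (u * v))) ∧
    (∀ u v : L, (u * c) * (s * v) = s * (c * (u * v)))

theorem DoubleIdentities.mul_mul_eq {c s : L} (h : DoubleIdentities c s) (u : L) :
    (u * c) * s = s * (c * u) := by
  simpa only [Loop.mul_one] using h.2 u 1

theorem IsMoufang.normConditions_of_doubleIdentities (hM : IsMoufang L) {c s : L}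
    (h : DoubleIdentities c s) : NormConditions c s := by
  have hcomm : c * s = s * c := by simpa only [Loop.one_mul, Loop.mul_one] using h.mul_mul_eq 1
  have hsc : ∀ u v : L, (u * s) * (c * v) = ((u * v) * c) * s := fun u v =>
    (h.1 u v).trans (h.mul_mul_eq _).symm
  have hk : ∀ a : L, (a * c) * s = a * (c * s) := fun a => by
    simpa only [Loop.rdiv_mul] using (hsc (rdiv a s) s).symm
  have hn : ∀ a : L, a * (c * s) = (c * s) * a := fun a => by
    simpa only [Loop.mul_ldiv, hk] using (hsc c (ldiv c a)).symm
  exact ⟨hn, hcomm, hk, hM.mul_mem_nuc_of_mul_mul_mul_eq hn hk fun u v => (hsc u v).trans (hk _)⟩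

theorem IsMoufang.doubleIdentities_of_normConditions (hM : IsMoufang L) {c s : L}
    (h : NormConditions c s) (h' : NormConditions s c) : DoubleIdentities c s := by
  obtain ⟨hn, hcomm, hk, hnuc⟩ := h
  obtain ⟨hn', -, hk', hnuc'⟩ := h'
  have hscw : ∀ w : L, s * (c * w) = (c * s) * w := hM.mul_mul_eq_of_mem_nuc hn hk hnuc
  refine ⟨fun u v => ?_, fun u v => ?_⟩
  · rw [hM.mul_mul_mul_eq_of_mem_nuc hn' hk' hnuc', hscw, ← hcomm, hn]
  · rw [hM.mul_mul_mul_eq_of_mem_nuc hn hk hnuc, hscw, hn]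

end Loop

section CayleyDickson

variable {L : Type u} [Loop L] {star : L → L} {γ : L}

theorem CDmul_moufang_iff (hstar2 : ∀ a : L, star (star a) = a)
    (hanti : ∀ a b : L, star (a * b) = star b * star a)
    (hγ : γ ∈ LCenter L) (hγs : star γ = γ) :
    (∀ x y z : L × Bool,
        CDmul star γ (CDmul star γ z x) (CDmul star γ y z)
          = CDmul star γ (CDmul star γ z (CDmul star γ x y)) z) ↔
      Loop.IsMoufang L ∧ ∀ c : L, Loop.DoubleIdentities c (star c) := by
  constructor
  · intro hD
    refine ⟨fun x y z => by
      simpa only [CDmul, Prod.mk.injEq, and_true] using hD (x, false) (y, false) (z, false),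
      fun c => ?_⟩
    have hsc := fun u v => hD (star v, false) (star u, false) (c, true)
    have hcs := fun u v => hD (star u, true) (v, true) (c, true)
    simp only [CDmul, Prod.mk.injEq, and_true, hanti, hstar2, hγs,
      Loop.mul_comm_of_mem_center hγ, Loop.mul_assoc_of_mem_center hγ,
      Loop.mul_left_comm_of_mem_center hγ, Loop.mul_left_cancel_iff] at hsc hcs
    exact ⟨hsc, hcs⟩
  · rintro ⟨hM, hdouble⟩ ⟨a, _ | _⟩ ⟨b, _ | _⟩ ⟨c, _ | _⟩ <;>
      simp only [CDmul, Prod.mk.injEq, and_true, hanti, hstar2, hγs,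
        Loop.mul_comm_of_mem_center hγ, Loop.mul_assoc_of_mem_center hγ,
        Loop.mul_left_comm_of_mem_center hγ, Loop.mul_left_cancel_iff]
    · exact hM a b c
    · exact (hdouble c).1 _ _
    · exact ((hdouble c).1 b a).trans ((hdouble c).mul_mul_eq _).symm
    · exact hM.moufang_middle_right _ _ c
    · exact ((hdouble c).2 a _).trans ((hdouble c).mul_mul_eq _).symm
    · exact hM.moufang_middle_right b _ c
    · exact hM _ a c
    · exact (hdouble c).2 _ _

end CayleyDickson

/-- For symmetric central `γ`, the double `D(L,*,γ)` is Moufang iff `L` is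
Moufang, `[a,cc^*] = 1`, `[c,c^*] = 1`, `[a,c,c^*] = 1`, and every `cc^*c`
is in the nucleus of `L`. -/
theorem stmt18 {L : Type u} [Loop L] (star : L → L)
    (hstar2 : ∀ a : L, star (star a) = a)
    (hanti : ∀ a b : L, star (a * b) = star b * star a)
    (γ : L) (hγ : γ ∈ LCenter L) (hγs : star γ = γ) :
    (∀ x y z : L × Bool,
        CDmul star γ (CDmul star γ z x) (CDmul star γ y z)
          = CDmul star γ (CDmul star γ z (CDmul star γ x y)) z) ↔
      ((∀ x y z : L, (z * x) * (y * z) = (z * (x * y)) * z) ∧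
       (∀ a c : L, a * (c * star c) = (c * star c) * a) ∧
       (∀ c : L, c * star c = star c * c) ∧
       (∀ a c : L, (a * c) * star c = a * (c * star c)) ∧
       (∀ c : L, (c * star c) * c ∈ LNuc L)) := by
  rw [CDmul_moufang_iff hstar2 hanti hγ hγs]
  constructor
  · rintro ⟨hM, hdouble⟩
    have hnorm := fun c => hM.normConditions_of_doubleIdentities (hdouble c)
    exact ⟨hM, fun a c => (hnorm c).1 a, fun c => (hnorm c).2.1, fun a c => (hnorm c).2.2.1 a,
      fun c => (hnorm c).2.2.2⟩
  · rintro ⟨hM : Loop.IsMoufang L, hn, hcomm, hk, hnuc⟩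
    have hnorm : ∀ c, Loop.NormConditions c (star c) := fun c =>
      ⟨fun a => hn a c, hcomm c, fun a => hk a c, hnuc c⟩
    refine ⟨hM, fun c => hM.doubleIdentities_of_normConditions (hnorm c) ?_⟩
    simpa only [hstar2] using hnorm (star c)
end
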